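/- Suppose $u: [0,T] \times (\mathbb{R}^d)^N \to \mathbb{R}$ is a function invariant under simultaneous permutation of the $N$ blocks of coordinates (i.e., $u(t, x_{\sigma(1)},\dots,x_{\sigma(N)}) = u(t, x_1,\dots,x_N)$ for every permutation $\sigma$), differentiable in space, and suppose that $\|D u(t, \cdot)\|_2 \leq C/\sqrt{N}$ uniformly on a convex permutation-invariant set. Then for all $\bar{x}, \bar{y}$ in that set, $|u(t,\bar{x}) - u(t,\bar{y})| \leq C\, \mathcal{W}_2(T_N(\bar{x}), T_N(\bar{y}))$, where $T_N$ denotes the empirical measure map and $\mathcal{W}_2$ the Wasserstein-2 distance. -/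

import Mathlib

open MeasureTheory

/-- The Wasserstein-`p` distance: `p`-th root of the infimal transport cost over couplings. -/
noncomputable def wasserstein (p : ℝ) {E : Type*} [MeasurableSpace E] [PseudoMetricSpace E]
    (μ ν : Measure E) : ℝ :=
  (sInf { c : ℝ | ∃ π : Measure (E × E), π.map Prod.fst = μ ∧ π.map Prod.snd = ν ∧
      c = ∫ q, dist q.1 q.2 ^ p ∂π }) ^ (1 / p)

/-- `(ℝ^d)^N` with the Euclidean (ℓ²) norm. -/
abbrev EN (d N : ℕ) := PiLp 2 (fun _ : Fin N => EuclideanSpace ℝ (Fin d))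

/-- Permute the `N` blocks of a vector in `(ℝ^d)^N`. -/
def permBlocks {d N : ℕ} (σ : Equiv.Perm (Fin N)) (z : EN d N) : EN d N :=
  WithLp.toLp 2 (fun i => z (σ i))

/-- The empirical measure `T_N(x) = N⁻¹ ∑ᵢ δ_{xᵢ}`. -/
noncomputable def empMeasure {d N : ℕ} (x : Fin N → EuclideanSpace ℝ (Fin d)) :
    Measure (EuclideanSpace ℝ (Fin d)) :=
  (N : ENNReal)⁻¹ • ∑ i, Measure.dirac (x i)

section Aux
variable {α : Type*}

lemma sum_div_fiber_card [DecidableEq α] {N : ℕ} (y : Fin N → α) (g : α → ℝ) :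
    ∑ j, g (y j) / ((Finset.univ.filter fun k => y k = y j).card : ℝ)
      = ∑ q ∈ Finset.image y Finset.univ, g q := by
  have h := Finset.sum_comp (s := (Finset.univ : Finset (Fin N)))
      (fun p => g p / ((Finset.univ.filter fun k => y k = p).card : ℝ)) y
  rw [h]
  refine Finset.sum_congr rfl fun q hq => ?_
  have hcard : (0:ℝ) < ((Finset.univ.filter fun k => y k = q).card : ℝ) := by
    obtain ⟨j, -, rfl⟩ := Finset.mem_image.mp hq
    have : j ∈ Finset.univ.filter fun k => y k = y j := by simp
    exact_mod_cast Finset.card_pos.mpr ⟨j, this⟩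
  rw [nsmul_eq_mul]
  field_simp

lemma measure_finset_eq_sum [MeasurableSpace α] [MeasurableSingletonClass α]
    (μ : Measure α) (s : Finset α) : μ ↑s = ∑ z ∈ s, μ {z} := by
  rw [← Set.biUnion_of_singleton (↑s : Set α),
    show (⋃ x ∈ (↑s : Set α), ({x} : Set α)) = ⋃ x ∈ s, {x} by simp,
    measure_biUnion_finset ?_ (fun b _ => measurableSet_singleton b)]
  intro i _ j _ hij
  simp [Function.onFun, Set.disjoint_singleton, hij]

lemma empMeasure_apply {d N : ℕ} (x : Fin N → EuclideanSpace ℝ (Fin d))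
    (s : Set (EuclideanSpace ℝ (Fin d))) (hs : MeasurableSet s) [DecidablePred (· ∈ s)] :
    empMeasure x s = (N : ENNReal)⁻¹ * ((Finset.univ.filter fun i => x i ∈ s).card : ENNReal) := by
  simp only [empMeasure, Measure.smul_apply, smul_eq_mul]
  congr 1
  rw [Measure.coe_finset_sum]
  simp only [Finset.sum_apply, Measure.dirac_apply' _ hs]
  rw [Finset.sum_indicator_eq_sum_filter]
  simp

end Aux

lemma empMeasure_isProb {d N : ℕ} (hN : 0 < N) (x : Fin N → EuclideanSpace ℝ (Fin d)) :
    IsProbabilityMeasure (empMeasure x) := by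
  classical
  constructor
  rw [empMeasure_apply x _ MeasurableSet.univ]
  simp only [Set.mem_univ, Finset.filter_true, Finset.card_univ, Fintype.card_fin]
  exact ENNReal.inv_mul_cancel (by exact_mod_cast hN.ne') (ENNReal.natCast_ne_top N)

lemma empMeasure_singleton_toReal {d N : ℕ} [DecidableEq (EuclideanSpace ℝ (Fin d))]
    (x : Fin N → EuclideanSpace ℝ (Fin d)) (p : EuclideanSpace ℝ (Fin d)) :
    (empMeasure x {p}).toReal = ((Finset.univ.filter fun i => x i = p).card : ℝ) / N := by
  classical
  rw [empMeasure_apply x _ (measurableSet_singleton p)]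
  simp only [Set.mem_singleton_iff]
  rw [ENNReal.toReal_mul, ENNReal.toReal_inv]
  simp [div_eq_inv_mul]

lemma empMeasure_compl_image {d N : ℕ} [DecidableEq (EuclideanSpace ℝ (Fin d))]
    (x : Fin N → EuclideanSpace ℝ (Fin d)) :
    empMeasure x (↑(Finset.image x Finset.univ) : Set (EuclideanSpace ℝ (Fin d)))ᶜ = 0 := by
  classical
  rw [empMeasure_apply x _ (Finset.image x Finset.univ).measurableSet.compl]
  have : (Finset.univ.filter fun i => x i ∈ (↑(Finset.image x Finset.univ) :
      Set (EuclideanSpace ℝ (Fin d)))ᶜ) = ∅ := by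
    ext i; simp
  rw [this]
  simp

set_option maxHeartbeats 2000000 in
lemma coupling_cost_bound {d N : ℕ} (hN : 0 < N) (x y : EN d N) (m CN : ℝ)
    (hCN : 0 ≤ CN)
    (hper : ∀ σ : Equiv.Perm (Fin N), m ≤ CN * Real.sqrt (∑ i, dist (x i) (y (σ i)) ^ 2))
    (π : Measure (EuclideanSpace ℝ (Fin d) × EuclideanSpace ℝ (Fin d)))
    (hπ1 : π.map Prod.fst = empMeasure (fun i => x i))
    (hπ2 : π.map Prod.snd = empMeasure (fun i => y i)) :
    0 ≤ ∫ q, dist q.1 q.2 ^ (2:ℝ) ∂π ∧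
      m ≤ CN * Real.sqrt ((N:ℝ) * ∫ q, dist q.1 q.2 ^ (2:ℝ) ∂π) := by
  classical
  set E := EuclideanSpace ℝ (Fin d) with hE
  haveI : IsProbabilityMeasure (empMeasure (fun i => y i)) := empMeasure_isProb hN _
  haveI : IsProbabilityMeasure (empMeasure (fun i => x i)) := empMeasure_isProb hN _
  haveI hπprob : IsProbabilityMeasure π := by
    constructor
    have h : π.map Prod.snd Set.univ = 1 := by rw [hπ2]; exact measure_univ
    rwa [Measure.map_apply measurable_snd MeasurableSet.univ, Set.preimage_univ] at h
  set Sx : Finset E := Finset.image (fun i => x i) Finset.univ with hSx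
  set Sy : Finset E := Finset.image (fun i => y i) Finset.univ with hSy
  have hXnull : π (Prod.fst ⁻¹' (↑Sx : Set E)ᶜ) = 0 := by
    rw [← Measure.map_apply measurable_fst Sx.measurableSet.compl, hπ1]
    exact empMeasure_compl_image _
  have hYnull : π (Prod.snd ⁻¹' (↑Sy : Set E)ᶜ) = 0 := by
    rw [← Measure.map_apply measurable_snd Sy.measurableSet.compl, hπ2]
    exact empMeasure_compl_image _
  have hcompl : π ((↑(Sx ×ˢ Sy) : Set (E × E)))ᶜ = 0 := by
    refine measure_mono_null (fun z hz => ?_) (measure_union_null hXnull hYnull)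
    simp only [Set.mem_compl_iff, Finset.coe_product, Set.mem_prod, not_and, Finset.mem_coe] at hz
    by_cases h1 : z.1 ∈ Sx
    · right; simpa using hz h1
    · left; simpa using h1
  have hres : π.restrict ↑(Sx ×ˢ Sy) = π := by
    apply Measure.restrict_eq_self_of_ae_mem
    rw [MeasureTheory.ae_iff]
    exact hcompl
  set w : E × E → ℝ := fun z => (π {z}).toReal with hw
  have hwnn : ∀ z, 0 ≤ w z := fun z => ENNReal.toReal_nonneg
  have hcost : ∫ q, dist q.1 q.2 ^ (2:ℝ) ∂π = ∑ z ∈ Sx ×ˢ Sy, w z * dist z.1 z.2 ^ 2 := by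
    have h2 : ∀ q : E × E, dist q.1 q.2 ^ (2:ℝ) = dist q.1 q.2 ^ (2:ℕ) := fun q => by
      rw [← Real.rpow_natCast]; norm_num
    calc ∫ q, dist q.1 q.2 ^ (2:ℝ) ∂π = ∫ q, dist q.1 q.2 ^ (2:ℕ) ∂π := by simp_rw [h2]
      _ = ∫ q in ↑(Sx ×ˢ Sy), dist q.1 q.2 ^ (2:ℕ) ∂π := by rw [hres]
      _ = ∑ z ∈ Sx ×ˢ Sy, (π {z}).toReal • (dist z.1 z.2 ^ (2:ℕ)) :=
          by rw [integral_finset]; rfl; exact IntegrableOn.finset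
      _ = _ := by simp [hw, smul_eq_mul]
  -- marginal row sums
  have hrowE : ∀ p : E, ∑ q ∈ Sy, π {(p, q)} = empMeasure (fun i => x i) {p} := by
    intro p
    have hA : π (Prod.fst ⁻¹' ({p} : Set E)) = empMeasure (fun i => x i) {p} := by
      rw [← Measure.map_apply measurable_fst (measurableSet_singleton p), hπ1]
    have hle : π (Prod.fst ⁻¹' ({p} : Set E)) ≤ π ↑(({p} : Finset E) ×ˢ Sy) := by
      calc π (Prod.fst ⁻¹' ({p} : Set E))
          ≤ π ((↑(({p} : Finset E) ×ˢ Sy) : Set (E × E)) ∪ Prod.snd ⁻¹' (↑Sy : Set E)ᶜ) := by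
            apply measure_mono
            intro z hz
            simp only [Set.mem_preimage, Set.mem_singleton_iff] at hz
            by_cases h2 : z.2 ∈ Sy
            · left
              simp only [Finset.coe_product, Set.mem_prod, Finset.mem_coe, Finset.mem_singleton]
              exact ⟨hz, h2⟩
            · right; simpa using h2
        _ ≤ π ↑(({p} : Finset E) ×ˢ Sy) + π (Prod.snd ⁻¹' (↑Sy : Set E)ᶜ) := measure_union_le _ _
        _ = π ↑(({p} : Finset E) ×ˢ Sy) := by rw [hYnull, add_zero]
    have hge : π ↑(({p} : Finset E) ×ˢ Sy) ≤ π (Prod.fst ⁻¹' ({p} : Set E)) := by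
      apply measure_mono
      intro z hz
      simp only [Finset.coe_product, Set.mem_prod, Finset.mem_coe, Finset.mem_singleton] at hz
      simp [hz.1]
    rw [← hA, le_antisymm hle hge, measure_finset_eq_sum, Finset.sum_product,
      Finset.sum_singleton]
  have hcolE : ∀ q : E, ∑ p ∈ Sx, π {(p, q)} = empMeasure (fun i => y i) {q} := by
    intro q
    have hA : π (Prod.snd ⁻¹' ({q} : Set E)) = empMeasure (fun i => y i) {q} := by
      rw [← Measure.map_apply measurable_snd (measurableSet_singleton q), hπ2]
    have hle : π (Prod.snd ⁻¹' ({q} : Set E)) ≤ π ↑(Sx ×ˢ ({q} : Finset E)) := by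
      calc π (Prod.snd ⁻¹' ({q} : Set E))
          ≤ π ((↑(Sx ×ˢ ({q} : Finset E)) : Set (E × E)) ∪ Prod.fst ⁻¹' (↑Sx : Set E)ᶜ) := by
            apply measure_mono
            intro z hz
            simp only [Set.mem_preimage, Set.mem_singleton_iff] at hz
            by_cases h2 : z.1 ∈ Sx
            · left
              simp only [Finset.coe_product, Set.mem_prod, Finset.mem_coe, Finset.mem_singleton]
              exact ⟨h2, hz⟩
            · right; simpa using h2
        _ ≤ π ↑(Sx ×ˢ ({q} : Finset E)) + π (Prod.fst ⁻¹' (↑Sx : Set E)ᶜ) := measure_union_le _ _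
        _ = π ↑(Sx ×ˢ ({q} : Finset E)) := by rw [hXnull, add_zero]
    have hge : π ↑(Sx ×ˢ ({q} : Finset E)) ≤ π (Prod.snd ⁻¹' ({q} : Set E)) := by
      apply measure_mono
      intro z hz
      simp only [Finset.coe_product, Set.mem_prod, Finset.mem_coe, Finset.mem_singleton] at hz
      simp [hz.2]
    rw [← hA, le_antisymm hle hge, measure_finset_eq_sum, Finset.sum_product,
      Finset.sum_comm]
    simp
  set cX : E → ℝ := fun p => ((Finset.univ.filter fun k => x k = p).card : ℝ) with hcXdef
  set cY : E → ℝ := fun p => ((Finset.univ.filter fun k => y k = p).card : ℝ) with hcYdef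
  have hcXpos : ∀ i, 0 < cX (x i) := fun i => by
    have h : i ∈ Finset.univ.filter fun k => x k = x i := by simp
    have h2 := Finset.card_pos.mpr ⟨i, h⟩
    simp only [hcXdef]
    exact_mod_cast h2
  have hcYpos : ∀ j, 0 < cY (y j) := fun j => by
    have h : j ∈ Finset.univ.filter fun k => y k = y j := by simp
    have h2 := Finset.card_pos.mpr ⟨j, h⟩
    simp only [hcYdef]
    exact_mod_cast h2
  have hXcard : ∀ p : E, (empMeasure (fun i => x i) {p}).toReal = cX p / N :=
    fun p => empMeasure_singleton_toReal _ p
  have hYcard : ∀ q : E, (empMeasure (fun i => y i) {q}).toReal = cY q / N :=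
    fun q => empMeasure_singleton_toReal _ q
  have hrow : ∀ p : E, ∑ q ∈ Sy, w (p, q) = cX p / N := by
    intro p
    have h := congrArg ENNReal.toReal (hrowE p)
    rw [ENNReal.toReal_sum (fun q _ => measure_ne_top π _)] at h
    rw [← hXcard p, ← h]
  have hcol : ∀ q : E, ∑ p ∈ Sx, w (p, q) = cY q / N := by
    intro q
    have h := congrArg ENNReal.toReal (hcolE q)
    rw [ENNReal.toReal_sum (fun p _ => measure_ne_top π _)] at h
    rw [← hYcard q, ← h]
  set a : Fin N → Fin N → ℝ := fun i j => w (x i, y j) / (cX (x i) * cY (y j)) with ha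
  have hN' : ((N:ℝ)) ≠ 0 := Nat.cast_ne_zero.mpr hN.ne'
  have hrowsum : ∀ i, ∑ j, a i j = 1 / N := by
    intro i
    calc ∑ j, a i j
        = ∑ j, (fun q => w (x i, q) / cX (x i)) (y j)
            / ((Finset.univ.filter fun k => y k = y j).card : ℝ) := by
          refine Finset.sum_congr rfl fun j _ => ?_
          simp only [ha, hcXdef, hcYdef]
          ring
      _ = ∑ q ∈ Sy, w (x i, q) / cX (x i) :=
          sum_div_fiber_card (fun j => y j) (fun q => w (x i, q) / cX (x i))
      _ = (∑ q ∈ Sy, w (x i, q)) / cX (x i) := by rw [Finset.sum_div]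
      _ = (cX (x i) / N) / cX (x i) := by rw [hrow]
      _ = 1 / N := by
          rw [div_div, mul_comm ((N:ℝ)) (cX (x i)), ← div_div, div_self (hcXpos i).ne']
  have hcolsum : ∀ j, ∑ i, a i j = 1 / N := by
    intro j
    calc ∑ i, a i j
        = ∑ i, (fun p => w (p, y j) / cY (y j)) (x i)
            / ((Finset.univ.filter fun k => x k = x i).card : ℝ) := by
          refine Finset.sum_congr rfl fun i _ => ?_
          simp only [ha, hcXdef, hcYdef]
          ring
      _ = ∑ p ∈ Sx, w (p, y j) / cY (y j) :=
          sum_div_fiber_card (fun i => x i) (fun p => w (p, y j) / cY (y j))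
      _ = (∑ p ∈ Sx, w (p, y j)) / cY (y j) := by rw [Finset.sum_div]
      _ = (cY (y j) / N) / cY (y j) := by rw [hcol]
      _ = 1 / N := by
          rw [div_div, mul_comm ((N:ℝ)) (cY (y j)), ← div_div, div_self (hcYpos j).ne']
  have hcost2 : ∑ z ∈ Sx ×ˢ Sy, w z * dist z.1 z.2 ^ 2
      = ∑ i, ∑ j, a i j * dist (x i) (y j) ^ 2 := by
    have hinner : ∀ i, ∑ j, a i j * dist (x i) (y j) ^ 2
        = (fun p => ∑ q ∈ Sy, w (p, q) * dist p q ^ 2) (x i) / cX (x i) := by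
      intro i
      calc ∑ j, a i j * dist (x i) (y j) ^ 2
          = ∑ j, (fun q => w (x i, q) * dist (x i) q ^ 2 / cX (x i)) (y j)
              / ((Finset.univ.filter fun k => y k = y j).card : ℝ) := by
            refine Finset.sum_congr rfl fun j _ => ?_
            simp only [ha]
            show _ = w (x i, y j) * dist (x i) (y j) ^ 2 / cX (x i) / cY (y j)
            ring
        _ = ∑ q ∈ Sy, w (x i, q) * dist (x i) q ^ 2 / cX (x i) :=
            sum_div_fiber_card (fun j => y j) (fun q => w (x i, q) * dist (x i) q ^ 2 / cX (x i))
        _ = (fun p => ∑ q ∈ Sy, w (p, q) * dist p q ^ 2) (x i) / cX (x i) := by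
            rw [Finset.sum_div]
    calc ∑ z ∈ Sx ×ˢ Sy, w z * dist z.1 z.2 ^ 2
        = ∑ p ∈ Sx, ∑ q ∈ Sy, w (p, q) * dist p q ^ 2 := by
          rw [Finset.sum_product]
      _ = ∑ i, (fun p => ∑ q ∈ Sy, w (p, q) * dist p q ^ 2) (x i)
            / ((Finset.univ.filter fun k => x k = x i).card : ℝ) :=
          (sum_div_fiber_card (fun i => x i) (fun p => ∑ q ∈ Sy, w (p, q) * dist p q ^ 2)).symm
      _ = ∑ i, ∑ j, a i j * dist (x i) (y j) ^ 2 := by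
          refine Finset.sum_congr rfl fun i _ => ?_
          rw [hinner i]
  have hM : Matrix.of (fun i j => (N:ℝ) * a i j) ∈ doublyStochastic ℝ (Fin N) := by
    rw [mem_doublyStochastic_iff_sum]
    refine ⟨fun i j => mul_nonneg (Nat.cast_nonneg N)
        (div_nonneg (hwnn _) (mul_nonneg (hcXpos i).le (hcYpos j).le)), fun i => ?_, fun j => ?_⟩
    · rw [show ∑ j, Matrix.of (fun i j => (N:ℝ) * a i j) i j = ∑ j, (N:ℝ) * a i j from rfl,
        ← Finset.mul_sum, hrowsum]
      field_simp
    · rw [show ∑ i, Matrix.of (fun i j => (N:ℝ) * a i j) i j = ∑ i, (N:ℝ) * a i j from rfl,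
        ← Finset.mul_sum, hcolsum]
      field_simp
  obtain ⟨lam, hlam0, hlam1, hlamsum⟩ := exists_eq_sum_perm_of_mem_doublyStochastic hM
  have hentry : ∀ i j, ∑ σ : Equiv.Perm (Fin N), lam σ * (if σ i = j then (1:ℝ) else 0)
      = (N:ℝ) * a i j := by
    intro i j
    have h := congrFun (congrFun hlamsum i) j
    simpa [Matrix.sum_apply, Equiv.Perm.permMatrix, PEquiv.toMatrix_apply,
      Equiv.toPEquiv_apply, smul_eq_mul, mul_ite] using h
  set sq : Equiv.Perm (Fin N) → ℝ := fun σ => ∑ i, dist (x i) (y (σ i)) ^ 2 with hsq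
  have hsnn : ∀ σ, 0 ≤ sq σ := fun σ => Finset.sum_nonneg fun i _ => pow_two_nonneg _
  have hNcost : (N:ℝ) * (∑ i, ∑ j, a i j * dist (x i) (y j) ^ 2) = ∑ σ, lam σ * sq σ := by
    calc (N:ℝ) * (∑ i, ∑ j, a i j * dist (x i) (y j) ^ 2)
        = ∑ i, ∑ j, ((N:ℝ) * a i j) * dist (x i) (y j) ^ 2 := by
          rw [Finset.mul_sum]
          refine Finset.sum_congr rfl fun i _ => ?_
          rw [Finset.mul_sum]
          exact Finset.sum_congr rfl fun j _ => by ring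
      _ = ∑ i, ∑ j, (∑ σ : Equiv.Perm (Fin N), lam σ * (if σ i = j then (1:ℝ) else 0))
            * dist (x i) (y j) ^ 2 := by simp_rw [hentry]
      _ = ∑ i, ∑ σ : Equiv.Perm (Fin N), lam σ * dist (x i) (y (σ i)) ^ 2 := by
          refine Finset.sum_congr rfl fun i _ => ?_
          simp_rw [Finset.sum_mul]
          rw [Finset.sum_comm]
          refine Finset.sum_congr rfl fun σ _ => ?_
          simp [mul_ite, ite_mul, Finset.sum_ite_eq]
      _ = ∑ σ, lam σ * sq σ := by
          rw [Finset.sum_comm]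
          refine Finset.sum_congr rfl fun σ _ => ?_
          rw [hsq, Finset.mul_sum]
  have hm1 : m ≤ CN * ∑ σ, lam σ * Real.sqrt (sq σ) := by
    calc m = (∑ σ, lam σ) * m := by rw [hlam1, one_mul]
      _ = ∑ σ, lam σ * m := by rw [Finset.sum_mul]
      _ ≤ ∑ σ, lam σ * (CN * Real.sqrt (sq σ)) :=
          Finset.sum_le_sum fun σ _ => mul_le_mul_of_nonneg_left (hper σ) (hlam0 σ)
      _ = CN * ∑ σ, lam σ * Real.sqrt (sq σ) := by
          rw [Finset.mul_sum]
          exact Finset.sum_congr rfl fun σ _ => by ring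
  have hCS : ∑ σ, lam σ * Real.sqrt (sq σ) ≤ Real.sqrt (∑ σ, lam σ * sq σ) := by
    have hnn : 0 ≤ ∑ σ, lam σ * Real.sqrt (sq σ) :=
      Finset.sum_nonneg fun σ _ => mul_nonneg (hlam0 σ) (Real.sqrt_nonneg _)
    rw [← Real.sqrt_sq hnn]
    apply Real.sqrt_le_sqrt
    calc (∑ σ, lam σ * Real.sqrt (sq σ)) ^ 2
        = (∑ σ, Real.sqrt (lam σ) * (Real.sqrt (lam σ) * Real.sqrt (sq σ))) ^ 2 := by
          congr 1
          exact Finset.sum_congr rfl fun σ _ => by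
            rw [← mul_assoc, Real.mul_self_sqrt (hlam0 σ)]
      _ ≤ (∑ σ, Real.sqrt (lam σ) ^ 2) * (∑ σ, (Real.sqrt (lam σ) * Real.sqrt (sq σ)) ^ 2) :=
          Finset.sum_mul_sq_le_sq_mul_sq _ _ _
      _ = (∑ σ, lam σ) * (∑ σ, lam σ * sq σ) := by
          congr 1
          · exact Finset.sum_congr rfl fun σ _ => Real.sq_sqrt (hlam0 σ)
          · exact Finset.sum_congr rfl fun σ _ => by
              rw [mul_pow, Real.sq_sqrt (hlam0 σ), Real.sq_sqrt (hsnn σ)]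
      _ = ∑ σ, lam σ * sq σ := by rw [hlam1, one_mul]
  constructor
  · rw [hcost]
    exact Finset.sum_nonneg fun z _ => mul_nonneg (hwnn z) (pow_two_nonneg _)
  · calc m ≤ CN * ∑ σ, lam σ * Real.sqrt (sq σ) := hm1
      _ ≤ CN * Real.sqrt (∑ σ, lam σ * sq σ) := mul_le_mul_of_nonneg_left hCS hCN
      _ = CN * Real.sqrt ((N:ℝ) * ∫ q, dist q.1 q.2 ^ (2:ℝ) ∂π) := by
          rw [← hNcost, hcost, hcost2]
theorem lipschitz_wrt_wasserstein_of_gradient_bound (d N : ℕ) (hN : 0 < N)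
    (T t C : ℝ) (ht : t ∈ Set.Icc 0 T) (hC : 0 ≤ C)
    (u : ℝ → EN d N → ℝ)
    (hperm : ∀ σ : Equiv.Perm (Fin N), ∀ s : ℝ, ∀ x : EN d N,
      u s (permBlocks σ x) = u s x)
    (hdiff : ∀ s : ℝ, Differentiable ℝ (u s))
    (A : Set (EN d N)) (hconv : Convex ℝ A)
    (hAperm : ∀ σ : Equiv.Perm (Fin N), ∀ x ∈ A, permBlocks σ x ∈ A)
    (hgrad : ∀ x ∈ A, ‖fderiv ℝ (u t) x‖ ≤ C / Real.sqrt N) :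
    ∀ x ∈ A, ∀ y ∈ A,
      |u t x - u t y| ≤
        C * wasserstein 2 (empMeasure (fun i => x i)) (empMeasure (fun i => y i)) := by
  intro x hx y hy
  classical
  haveI hPx : IsProbabilityMeasure (empMeasure (fun i => x i)) := empMeasure_isProb hN _
  haveI hPy : IsProbabilityMeasure (empMeasure (fun i => y i)) := empMeasure_isProb hN _
  set m := |u t x - u t y| with hm
  have hm0 : 0 ≤ m := abs_nonneg _
  have hsqrtN : (0:ℝ) < Real.sqrt N := Real.sqrt_pos.mpr (by exact_mod_cast hN)
  have hper : ∀ σ : Equiv.Perm (Fin N),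
      m ≤ (C / Real.sqrt N) * Real.sqrt (∑ i, dist (x i) (y (σ i)) ^ 2) := by
    intro σ
    have hyσ : permBlocks σ y ∈ A := hAperm σ y hy
    have h2 := hconv.norm_image_sub_le_of_norm_fderiv_le
        (fun z _ => (hdiff t) z) hgrad hyσ hx
    have hnorm : ‖x - permBlocks σ y‖ = Real.sqrt (∑ i, dist (x i) (y (σ i)) ^ 2) := by
      rw [← Real.sqrt_sq (norm_nonneg _)]
      congr 1
      rw [PiLp.norm_sq_eq_of_L2]
      refine Finset.sum_congr rfl fun i _ => ?_
      rw [dist_eq_norm]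
      simp [permBlocks]
    calc m = ‖u t x - u t (permBlocks σ y)‖ := by
          rw [hperm σ t y, hm]; exact (Real.norm_eq_abs _).symm
      _ ≤ (C / Real.sqrt N) * ‖x - permBlocks σ y‖ := h2
      _ = _ := by rw [hnorm]
  set S := { c : ℝ | ∃ π : Measure (EuclideanSpace ℝ (Fin d) × EuclideanSpace ℝ (Fin d)),
      π.map Prod.fst = empMeasure (fun i => x i) ∧
      π.map Prod.snd = empMeasure (fun i => y i) ∧
      c = ∫ q, dist q.1 q.2 ^ (2:ℝ) ∂π } with hS
  have key : ∀ c ∈ S, 0 ≤ c ∧ m ≤ C * Real.sqrt c := by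
    rintro c ⟨π, h1, h2, rfl⟩
    obtain ⟨hc0, hmc⟩ :=
      coupling_cost_bound hN x y m _ (div_nonneg hC hsqrtN.le) hper π h1 h2
    refine ⟨hc0, ?_⟩
    calc m ≤ C / Real.sqrt N * Real.sqrt ((N:ℝ) * ∫ q, dist q.1 q.2 ^ (2:ℝ) ∂π) := hmc
      _ = C * Real.sqrt (∫ q, dist q.1 q.2 ^ (2:ℝ) ∂π) := by
          rw [Real.sqrt_mul (Nat.cast_nonneg N)]
          field_simp
  have hne : S.Nonempty := by
    refine ⟨∫ q, dist q.1 q.2 ^ (2:ℝ)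
        ∂((empMeasure fun i => x i).prod (empMeasure fun i => y i)),
      (empMeasure fun i => x i).prod (empMeasure fun i => y i), ?_, ?_, rfl⟩
    · rw [Measure.map_fst_prod]; simp
    · rw [Measure.map_snd_prod]; simp
  have hgoal : m ≤ C * Real.sqrt (sInf S) := by
    rcases eq_or_lt_of_le hC with hC0 | hCpos
    · obtain ⟨c, hc⟩ := hne
      have h4 := (key c hc).2
      rw [← hC0] at h4 ⊢
      simp only [zero_mul] at h4 ⊢
      exact h4
    · have hb : ∀ c ∈ S, (m / C) ^ 2 ≤ c := by
        intro c hc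
        obtain ⟨hc0, h4⟩ := key c hc
        have h5 : m / C ≤ Real.sqrt c := (div_le_iff₀ hCpos).mpr (by linarith [h4])
        calc (m / C) ^ 2 ≤ Real.sqrt c ^ 2 := by
              exact pow_le_pow_left₀ (div_nonneg hm0 hC) h5 2
          _ = c := Real.sq_sqrt hc0
      have h6 : (m / C) ^ 2 ≤ sInf S := le_csInf hne hb
      have h7 : m / C ≤ Real.sqrt (sInf S) := by
        rw [← Real.sqrt_sq (div_nonneg hm0 hC)]
        exact Real.sqrt_le_sqrt h6
      calc m = C * (m / C) := by field_simp
        _ ≤ C * Real.sqrt (sInf S) := mul_le_mul_of_nonneg_left h7 hC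
  have hsq : Real.sqrt (sInf S) = (sInf S) ^ (1 / (2:ℝ)) := Real.sqrt_eq_rpow _
  rw [hsq] at hgoal
  exact hgoal
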